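/- arXiv:1305.1376 — 4 statements merged into one kernel-verified Lean document; each statement's English description precedes it below -/
import Mathlib

section
/- Let H be a probability measure on [ω,∞) with ω > 0, y ∈ (0,1), and z ∈ ℂ with Im(z) > 0. Then the equation w = ∫ t / ((1+t)/√z − (1−y)√z − y·w) dH(t) has at most one solution w with Im(w) > 0. -/
/-!
Write `D_w(t) = c(t) - y w` with `c(t) = (1 + t)/√z - (1 - y)√z`; all that is used about `c` is
`-Im c(t) ≥ κ (1 + t)` for `κ = Im √z / |√z|² > 0`, which makes all the integrands bounded.
Taking imaginary parts of `w = ∫ t / D_w dH` gives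
`Im w = ∫ t (-Im c) / |D_w|² dH + y Im w ∫ t / |D_w|² dH` with a positive first term, so
`y ∫ t / |D_w|² dH < 1` for every solution. Subtracting the equations of two distinct solutions
gives `1 = y ∫ t / (D_{w₁} D_{w₂}) dH`, and AM-GM on `1 / (|D_{w₁}| |D_{w₂}|)` contradicts this.
-/

open MeasureTheory

lemma integral_pos_of_ae_pos {α : Type*} [MeasurableSpace α] {μ : Measure α} [NeZero μ]
    {f : α → ℝ} (hf : ∀ᵐ x ∂μ, 0 < f x) (hfi : Integrable f μ) : 0 < ∫ x, f x ∂μ := by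
  rw [integral_pos_iff_support_of_nonneg_ae (hf.mono fun _ h => h.le) hfi,
    measure_congr (ae_eq_univ.mpr (measure_mono_null (fun x hx => ?_) (ae_iff.mp hf)))]
  · exact Measure.measure_univ_pos.mpr (NeZero.ne μ)
  · exact fun hpos => hx hpos.ne'

lemma im_ofReal_div (t : ℝ) (D : ℂ) : ((t : ℂ) / D).im = t * -D.im / ‖D‖ ^ 2 := by
  rw [Complex.div_im, ← Complex.normSq_eq_norm_sq]
  simp only [Complex.ofReal_im, Complex.ofReal_re]
  ring

lemma neg_im_le_norm (D : ℂ) : -D.im ≤ ‖D‖ :=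
  (neg_le_abs _).trans (Complex.abs_im_le_norm _)

lemma norm_ofReal_div_mul_le {t : ℝ} (ht : 0 ≤ t) (D₁ D₂ : ℂ) :
    ‖(t : ℂ) / (D₁ * D₂)‖ ≤ (t / ‖D₁‖ ^ 2 + t / ‖D₂‖ ^ 2) / 2 := by
  rw [norm_div, norm_mul, Complex.norm_real, Real.norm_of_nonneg ht]
  calc t / (‖D₁‖ * ‖D₂‖) = t * (2 * ‖D₁‖⁻¹ * ‖D₂‖⁻¹) / 2 := by rw [div_eq_mul_inv, mul_inv]; ring
    _ ≤ t * (‖D₁‖⁻¹ ^ 2 + ‖D₂‖⁻¹ ^ 2) / 2 := by gcongr; exact two_mul_le_add_sq _ _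
    _ = (t / ‖D₁‖ ^ 2 + t / ‖D₂‖ ^ 2) / 2 := by rw [inv_pow, inv_pow]; ring

section FixedPoint

variable {H : Measure ℝ} {c : ℝ → ℂ} {κ y : ℝ} {w w₁ w₂ : ℂ}

lemma neg_im_sub_mul (t : ℝ) : -(c t - y * w).im = -(c t).im + y * w.im := by
  simp only [Complex.sub_im, Complex.mul_im, Complex.ofReal_re, Complex.ofReal_im]
  ring

lemma mul_one_add_le_norm_sub_mul (hc : ∀ t, κ * (1 + t) ≤ -(c t).im) (hy : 0 ≤ y)
    (hw : 0 ≤ w.im) (t : ℝ) : κ * (1 + t) ≤ ‖c t - y * w‖ :=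
  calc κ * (1 + t) ≤ -(c t).im + y * w.im := by nlinarith [hc t]
    _ = -(c t - y * w).im := (neg_im_sub_mul t).symm
    _ ≤ ‖c t - y * w‖ := neg_im_le_norm _

lemma mul_im_le_norm_sub_mul (hκ : 0 < κ) (hc : ∀ t, κ * (1 + t) ≤ -(c t).im) {t : ℝ}
    (ht : 0 ≤ t) : y * w.im ≤ ‖c t - y * w‖ :=
  calc y * w.im ≤ -(c t).im + y * w.im := by nlinarith [hc t]
    _ = -(c t - y * w).im := (neg_im_sub_mul t).symm
    _ ≤ ‖c t - y * w‖ := neg_im_le_norm _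

lemma norm_sub_mul_pos (hκ : 0 < κ) (hc : ∀ t, κ * (1 + t) ≤ -(c t).im) (hy : 0 ≤ y)
    (hw : 0 ≤ w.im) {t : ℝ} (ht : 0 ≤ t) : 0 < ‖c t - y * w‖ :=
  (by positivity : 0 < κ * (1 + t)).trans_le (mul_one_add_le_norm_sub_mul hc hy hw t)

lemma integrable_ofReal_div_sub_mul [IsFiniteMeasure H] (hH : ∀ᵐ t ∂H, 0 ≤ t)
    (hc_meas : Measurable c) (hκ : 0 < κ) (hc : ∀ t, κ * (1 + t) ≤ -(c t).im) (hy : 0 ≤ y)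
    (hw : 0 ≤ w.im) : Integrable (fun t : ℝ => (t : ℂ) / (c t - y * w)) H := by
  refine (integrable_const κ⁻¹).mono' (by fun_prop : Measurable _).aestronglyMeasurable ?_
  filter_upwards [hH] with t ht
  have hD := mul_one_add_le_norm_sub_mul hc hy hw t
  rw [norm_div, Complex.norm_real, Real.norm_of_nonneg ht,
    div_le_iff₀ (norm_sub_mul_pos hκ hc hy hw ht), inv_mul_eq_div, le_div_iff₀ hκ]
  nlinarith

lemma integrable_div_norm_sub_mul_sq [IsFiniteMeasure H] (hH : ∀ᵐ t ∂H, 0 ≤ t)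
    (hc_meas : Measurable c) (hκ : 0 < κ) (hc : ∀ t, κ * (1 + t) ≤ -(c t).im) (hy : 0 < y)
    (hw : 0 < w.im) : Integrable (fun t : ℝ => t / ‖c t - y * w‖ ^ 2) H := by
  refine (integrable_const (κ * (y * w.im))⁻¹).mono'
    (by fun_prop : Measurable _).aestronglyMeasurable ?_
  filter_upwards [hH] with t ht
  have hD₁ := mul_one_add_le_norm_sub_mul hc hy.le hw.le t
  have hD₂ := mul_im_le_norm_sub_mul (y := y) (w := w) hκ hc ht
  rw [Real.norm_of_nonneg (by positivity),
    div_le_iff₀ (pow_pos (norm_sub_mul_pos hκ hc hy.le hw.le ht) 2), inv_mul_eq_div,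
    le_div_iff₀ (by positivity)]
  nlinarith [mul_le_mul hD₁ hD₂ (by positivity) (by positivity)]

lemma mul_integral_div_norm_sub_mul_sq_lt_one [IsFiniteMeasure H] [NeZero H]
    (hH : ∀ᵐ t ∂H, 0 < t) (hc_meas : Measurable c) (hκ : 0 < κ)
    (hc : ∀ t, κ * (1 + t) ≤ -(c t).im) (hy : 0 < y) (hw : 0 < w.im)
    (hfix : w = ∫ t, (t : ℂ) / (c t - y * w) ∂H) :
    y * ∫ t, t / ‖c t - y * w‖ ^ 2 ∂H < 1 := by
  have hH₀ : ∀ᵐ t ∂H, 0 ≤ t := hH.mono fun _ ht => ht.le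
  have hf := integrable_ofReal_div_sub_mul hH₀ hc_meas hκ hc hy.le hw.le
  have hg := integrable_div_norm_sub_mul_sq hH₀ hc_meas hκ hc hy hw
  set S := ∫ t, t / ‖c t - y * w‖ ^ 2 ∂H
  have hsplit : (fun t : ℝ => ((t : ℂ) / (c t - y * w)).im) =
      fun t => t * -(c t).im / ‖c t - y * w‖ ^ 2 + y * w.im * (t / ‖c t - y * w‖ ^ 2) := by
    ext t
    rw [im_ofReal_div, neg_im_sub_mul]
    ring
  have hPi : Integrable (fun t => t * -(c t).im / ‖c t - y * w‖ ^ 2) H := by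
    have hfi : Integrable (fun t : ℝ => ((t : ℂ) / (c t - y * w)).im) H := hf.im
    rw [hsplit] at hfi
    simpa only [Pi.sub_def, add_sub_cancel_right] using hfi.sub (hg.const_mul (y * w.im))
  have hP : 0 < ∫ t, t * -(c t).im / ‖c t - y * w‖ ^ 2 ∂H := by
    refine integral_pos_of_ae_pos ?_ hPi
    filter_upwards [hH] with t ht
    have hct : 0 < -(c t).im := by nlinarith [hc t]
    exact div_pos (mul_pos ht hct) (pow_pos (norm_sub_mul_pos hκ hc hy.le hw.le ht.le) 2)
  have him : w.im = ∫ t, t * -(c t).im / ‖c t - y * w‖ ^ 2 ∂H + y * w.im * S := by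
    conv_lhs => rw [hfix]
    rw [← integral_const_mul, ← integral_add hPi (hg.const_mul _), ← hsplit]
    exact (integral_im hf).symm
  nlinarith

theorem eq_of_eq_integral_div_sub_mul [IsFiniteMeasure H] [NeZero H]
    (hH : ∀ᵐ t ∂H, 0 < t) (hc_meas : Measurable c) (hκ : 0 < κ)
    (hc : ∀ t, κ * (1 + t) ≤ -(c t).im) (hy : 0 < y) (hw₁ : 0 < w₁.im) (hw₂ : 0 < w₂.im)
    (hfix₁ : w₁ = ∫ t, (t : ℂ) / (c t - y * w₁) ∂H)
    (hfix₂ : w₂ = ∫ t, (t : ℂ) / (c t - y * w₂) ∂H) :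
    w₁ = w₂ := by
  have hH₀ : ∀ᵐ t ∂H, 0 ≤ t := hH.mono fun _ ht => ht.le
  have hD {w : ℂ} (hw : 0 < w.im) {t : ℝ} (ht : 0 ≤ t) : c t - y * w ≠ 0 :=
    norm_pos_iff.mp (norm_sub_mul_pos hκ hc hy.le hw.le ht)
  set K := ∫ t, (t : ℂ) / ((c t - y * w₁) * (c t - y * w₂)) ∂H
  have hdiff : w₁ - w₂ = y * (w₁ - w₂) * K := by
    conv_lhs => rw [hfix₁, hfix₂]
    rw [← integral_sub (integrable_ofReal_div_sub_mul hH₀ hc_meas hκ hc hy.le hw₁.le)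
      (integrable_ofReal_div_sub_mul hH₀ hc_meas hκ hc hy.le hw₂.le), ← integral_const_mul]
    refine integral_congr_ae ?_
    filter_upwards [hH₀] with t ht
    rw [div_sub_div _ _ (hD hw₁ ht) (hD hw₂ ht)]
    ring
  by_contra hne
  have hyK : y * ‖K‖ = 1 := by
    have h : (w₁ - w₂) * (y * K) = (w₁ - w₂) * 1 := by linear_combination -hdiff
    simpa [abs_of_pos hy] using congrArg norm (mul_left_cancel₀ (sub_ne_zero.mpr hne) h)
  have hK : ‖K‖ ≤ (∫ t, t / ‖c t - y * w₁‖ ^ 2 ∂H + ∫ t, t / ‖c t - y * w₂‖ ^ 2 ∂H) / 2 := by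
    have hg₁ := integrable_div_norm_sub_mul_sq hH₀ hc_meas hκ hc hy hw₁
    have hg₂ := integrable_div_norm_sub_mul_sq hH₀ hc_meas hκ hc hy hw₂
    rw [← integral_add hg₁ hg₂, ← integral_div]
    exact norm_integral_le_of_norm_le ((hg₁.add hg₂).div_const 2)
      (hH₀.mono fun t ht => norm_ofReal_div_mul_le ht _ _)
  have h₁ := mul_integral_div_norm_sub_mul_sq_lt_one hH hc_meas hκ hc hy hw₁ hfix₁
  have h₂ := mul_integral_div_norm_sub_mul_sq_lt_one hH hc_meas hκ hc hy hw₂ hfix₂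
  nlinarith

end FixedPoint

lemma mul_one_add_le_neg_im_div_sub_mul {r : ℂ} (hr : 0 < r.im) {y : ℝ} (hy : y ≤ 1) (t : ℝ) :
    r.im / ‖r‖ ^ 2 * (1 + t) ≤ -((1 + (t : ℂ)) / r - (1 - (y : ℂ)) * r).im := by
  have h : -((1 + (t : ℂ)) / r - (1 - (y : ℂ)) * r).im
      = r.im / ‖r‖ ^ 2 * (1 + t) + (1 - y) * r.im := by
    rw [Complex.sub_im, Complex.div_im, ← Complex.normSq_eq_norm_sq]
    simp only [Complex.add_re, Complex.add_im, Complex.one_re, Complex.one_im, Complex.ofReal_re,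
      Complex.ofReal_im, Complex.mul_im, Complex.sub_re, Complex.sub_im]
    ring
  rw [h]
  nlinarith

theorem stmt_3_general (H : Measure ℝ) [IsProbabilityMeasure H]
    (ω : ℝ) (hω : 0 < ω) (hsupp : ∀ᵐ t ∂H, ω ≤ t)
    (y : ℝ) (hy : y ∈ Set.Ioo (0 : ℝ) 1)
    (r : ℂ) (hrim : 0 < r.im)
    (w₁ w₂ : ℂ) (hw₁ : 0 < w₁.im) (hw₂ : 0 < w₂.im)
    (hfix₁ : w₁ = ∫ t, (t : ℂ) / ((1 + (t : ℂ)) / r - (1 - (y : ℂ)) * r - (y : ℂ) * w₁) ∂H)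
    (hfix₂ : w₂ = ∫ t, (t : ℂ) / ((1 + (t : ℂ)) / r - (1 - (y : ℂ)) * r - (y : ℂ) * w₂) ∂H) :
    w₁ = w₂ := by
  have hr : 0 < r.im / ‖r‖ ^ 2 := div_pos hrim (pow_pos (hrim.trans_le (Complex.im_le_norm r)) 2)
  exact eq_of_eq_integral_div_sub_mul (hsupp.mono fun t ht => hω.trans_le ht) (by fun_prop) hr
    (mul_one_add_le_neg_im_div_sub_mul hrim hy.2.le) hy.1 hw₁ hw₂ hfix₁ hfix₂

/-- Uniqueness of the solution with positive imaginary part of the fixed point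
equation w = ∫ t/((1+t)/√z − (1−y)√z − y·w) dH(t). -/
theorem stmt_3 (H : Measure ℝ) [IsProbabilityMeasure H]
    (ω : ℝ) (hω : 0 < ω) (hsupp : ∀ᵐ t ∂H, ω ≤ t)
    (y : ℝ) (hy : y ∈ Set.Ioo (0 : ℝ) 1)
    (z : ℂ) (hz : 0 < z.im)
    (r : ℂ) (hr : r ^ 2 = z) (hrim : 0 < r.im)
    (w₁ w₂ : ℂ) (hw₁ : 0 < w₁.im) (hw₂ : 0 < w₂.im)
    (hfix₁ : w₁ = ∫ t, (t : ℂ) / ((1 + (t : ℂ)) / r - (1 - (y : ℂ)) * r - (y : ℂ) * w₁) ∂H)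
    (hfix₂ : w₂ = ∫ t, (t : ℂ) / ((1 + (t : ℂ)) / r - (1 - (y : ℂ)) * r - (y : ℂ) * w₂) ∂H) :
    w₁ = w₂ :=
  stmt_3_general H ω hω hsupp y hy r hrim w₁ w₂ hw₁ hw₂ hfix₁ hfix₂
end

section
/- Let H be a probability measure, y ∈ (0,1), and z ∈ ℂ with Im(z) ≠ 0. Suppose m₁ and m₂ are two complex numbers each satisfying mⱼ = ∫ 1/(λ/z − 1/(1 − y·mⱼ)) dH(λ) with Im(mⱼ)·Im(z) > 0 and 1 − y·mⱼ ≠ 0. Then m₁ = m₂. -/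
/-!
Write `w = 1/(1 - y m)` and `d(t) = t/z - w`. Since `Im w` has the sign of `Im m`, hence of `Im z`,
taking imaginary parts in the fixed-point equation gives
`Im m · Im z = ∫ (t Im(z)²/|z|² + Im w · Im z) / |d|² dH > Im w · Im z ∫ 1/|d|² dH`,
and `Im w = y Im m |w|²` turns this into `y ∫ |w/d|² dH < 1`.
On the other hand `1/d₁ - 1/d₂ = (w₁ - w₂)/(d₁ d₂)` and `w₁ - w₂ = y (m₁ - m₂) w₁ w₂`, so
`m₁ - m₂ = (m₁ - m₂) · y ∫ (w₁/d₁)(w₂/d₂) dH`, and by AM-GM the last factor has modulus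
`< 1`; hence `m₁ = m₂`.
-/

open MeasureTheory Complex

theorem integral_lt_integral_of_ae_lt {α : Type*} [MeasurableSpace α] {μ : Measure α} [NeZero μ]
    {f g : α → ℝ} (hf : Integrable f μ) (hg : Integrable g μ) (hlt : ∀ᵐ x ∂μ, f x < g x) :
    ∫ x, f x ∂μ < ∫ x, g x ∂μ := by
  rw [← sub_pos, ← integral_sub hg hf, integral_pos_iff_support_of_nonneg_ae
    (hlt.mono fun x hx => (sub_pos.2 hx).le) (hg.sub hf), pos_iff_ne_zero]
  intro h0
  obtain ⟨x, hx, hgf⟩ := ((measure_eq_zero_iff_ae_notMem.1 h0).and hlt).exists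
  exact hx (sub_ne_zero.2 hgf.ne')

theorem norm_integral_mul_le_half_add {α 𝕜 : Type*} [MeasurableSpace α] {μ : Measure α}
    [RCLike 𝕜] {f g : α → 𝕜} (hf : MemLp f 2 μ) (hg : MemLp g 2 μ) :
    ‖∫ x, f x * g x ∂μ‖ ≤ ((∫ x, ‖f x‖ ^ 2 ∂μ) + ∫ x, ‖g x‖ ^ 2 ∂μ) / 2 := by
  have hf2 := hf.integrable_norm_pow two_ne_zero
  have hg2 := hg.integrable_norm_pow two_ne_zero
  have amgm : ∀ x, ‖f x * g x‖ ≤ (‖f x‖ ^ 2 + ‖g x‖ ^ 2) / 2 := fun x => by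
    rw [norm_mul]; nlinarith [sq_nonneg (‖f x‖ - ‖g x‖)]
  calc ‖∫ x, f x * g x ∂μ‖ ≤ ∫ x, ‖f x * g x‖ ∂μ := norm_integral_le_integral_norm _
    _ ≤ ∫ x, (‖f x‖ ^ 2 + ‖g x‖ ^ 2) / 2 ∂μ :=
      integral_mono_of_nonneg (ae_of_all _ fun _ => norm_nonneg _) ((hf2.add hg2).div_const 2)
        (ae_of_all _ amgm)
    _ = _ := by rw [integral_div, integral_add hf2 hg2]

theorem one_div_sub_sub_one_div_sub {a w₁ w₂ y m₁ m₂ : ℂ} (hw₁ : w₁ * (1 - y * m₁) = 1)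
    (hw₂ : w₂ * (1 - y * m₂) = 1) (hd₁ : a - w₁ ≠ 0) (hd₂ : a - w₂ ≠ 0) :
    1 / (a - w₁) - 1 / (a - w₂)
      = (m₁ - m₂) * (y * (w₁ * (1 / (a - w₁)) * (w₂ * (1 / (a - w₂))))) := by
  have hw : w₁ - w₂ = (m₁ - m₂) * (y * (w₁ * w₂)) := by linear_combination w₂ * hw₁ - w₁ * hw₂
  field_simp
  linear_combination hw

theorem im_one_div_one_sub_ofReal_mul (y : ℝ) (m : ℂ) :
    (1 / (1 - (y : ℂ) * m)).im = y * m.im * ‖1 / (1 - (y : ℂ) * m)‖ ^ 2 := by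
  rw [one_div, inv_im, norm_inv, inv_pow, Complex.sq_norm]
  simp only [sub_im, one_im, mul_im, ofReal_re, ofReal_im, zero_mul, add_zero, zero_sub, neg_neg]
  ring

theorem im_one_div_one_sub_ofReal_mul_mul_pos {y : ℝ} (hy : 0 < y) {z m : ℂ}
    (him : 0 < m.im * z.im) (hden : 1 - (y : ℂ) * m ≠ 0) :
    0 < (1 / (1 - (y : ℂ) * m)).im * z.im := by
  have hw := norm_pos_iff.2 (one_div_ne_zero hden)
  calc 0 < y * ‖1 / (1 - (y : ℂ) * m)‖ ^ 2 * (m.im * z.im) := by positivity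
    _ = _ := by rw [im_one_div_one_sub_ofReal_mul]; ring

section Resolvent

variable {z w : ℂ}

theorem abs_im_le_norm_div_sub {t : ℝ} (ht : 0 ≤ t) (hw : 0 < w.im * z.im) :
    |w.im| ≤ ‖(t : ℂ) / z - w‖ := by
  have him : ((t : ℂ) / z - w).im = -(t * z.im / normSq z + w.im) := by
    simp only [sub_im, div_im, ofReal_im, zero_mul, zero_div, ofReal_re, zero_sub, neg_add_rev]
    ring
  have hsame : 0 ≤ t * z.im / normSq z * w.im := by
    have : t * z.im / normSq z * w.im = t / normSq z * (w.im * z.im) := by ring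
    rw [this]; exact mul_nonneg (div_nonneg ht (normSq_nonneg z)) hw.le
  calc |w.im| ≤ |t * z.im / normSq z + w.im| := sq_le_sq.1 (by nlinarith)
    _ = |((t : ℂ) / z - w).im| := by rw [him, abs_neg]
    _ ≤ _ := abs_im_le_norm _

theorem div_sub_ne_zero {t : ℝ} (ht : 0 ≤ t) (hw : 0 < w.im * z.im) : (t : ℂ) / z - w ≠ 0 := by
  have hwim : w.im ≠ 0 := left_ne_zero_of_mul hw.ne'
  exact norm_pos_iff.1 ((abs_pos.2 hwim).trans_le (abs_im_le_norm_div_sub ht hw))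

theorem memLp_top_one_div_div_sub {H : Measure ℝ} (hsupp : ∀ᵐ t ∂H, 0 ≤ t)
    (hw : 0 < w.im * z.im) : MemLp (fun t : ℝ => 1 / ((t : ℂ) / z - w)) ⊤ H := by
  have hwim : 0 < |w.im| := abs_pos.2 (left_ne_zero_of_mul hw.ne')
  refine memLp_top_of_bound (Measurable.aestronglyMeasurable (by fun_prop)) (1 / |w.im|)
    (hsupp.mono fun t ht => ?_)
  rw [norm_div, norm_one]
  exact one_div_le_one_div_of_le hwim (abs_im_le_norm_div_sub ht hw)

theorem im_one_div_div_sub_mul_im (t : ℝ) :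
    (1 / ((t : ℂ) / z - w)).im * z.im
      = (t * z.im ^ 2 / normSq z + w.im * z.im) * ‖1 / ((t : ℂ) / z - w)‖ ^ 2 := by
  rw [one_div, inv_im, norm_inv, inv_pow, Complex.sq_norm]
  simp only [sub_im, div_im, ofReal_im, zero_mul, zero_div, ofReal_re, zero_sub, neg_sub,
    sub_neg_eq_add]
  ring

theorem im_mul_integral_norm_one_div_div_sub_sq_lt {H : Measure ℝ} [IsProbabilityMeasure H]
    (hsupp : ∀ᵐ t ∂H, 0 < t) {m : ℂ} (hw : 0 < w.im * z.im)
    (hm : m = ∫ t, 1 / ((t : ℂ) / z - w) ∂H) :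
    w.im * z.im * ∫ t, ‖1 / ((t : ℂ) / z - w)‖ ^ 2 ∂H < m.im * z.im := by
  have hmem := memLp_top_one_div_div_sub (hsupp.mono fun _ => le_of_lt) hw
  have hint := hmem.integrable le_top
  have hint_sq := (hmem.mono_exponent (p := (2 : ℕ)) le_top).integrable_norm_pow'
  have hlt : ∀ᵐ t : ℝ ∂H, w.im * z.im * ‖1 / ((t : ℂ) / z - w)‖ ^ 2
      < (1 / ((t : ℂ) / z - w)).im * z.im := hsupp.mono fun t ht => by
    have hd : 0 < ‖1 / ((t : ℂ) / z - w)‖ ^ 2 :=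
      pow_pos (norm_pos_iff.2 (one_div_ne_zero (div_sub_ne_zero ht.le hw))) 2
    have hzim : z.im ≠ 0 := right_ne_zero_of_mul hw.ne'
    have hz : 0 < normSq z := normSq_pos.2 fun h => hzim (by simp [h])
    rw [im_one_div_div_sub_mul_im]
    exact mul_lt_mul_of_pos_right (lt_add_of_pos_left _ (by positivity)) hd
  calc w.im * z.im * ∫ t, ‖1 / ((t : ℂ) / z - w)‖ ^ 2 ∂H
      = ∫ t, w.im * z.im * ‖1 / ((t : ℂ) / z - w)‖ ^ 2 ∂H := (integral_const_mul _ _).symm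
    _ < ∫ t, (1 / ((t : ℂ) / z - w)).im * z.im ∂H :=
      integral_lt_integral_of_ae_lt (hint_sq.const_mul _) (hint.im.mul_const _) hlt
    _ = m.im * z.im := by
      rw [integral_mul_const, hm]
      exact congrArg (· * z.im) (integral_im hint)

end Resolvent

theorem ofReal_mul_integral_norm_sq_lt_one {H : Measure ℝ} [IsProbabilityMeasure H]
    (hsupp : ∀ᵐ t ∂H, 0 < t) {y : ℝ} (hy : 0 < y) {z m : ℂ} (him : 0 < m.im * z.im)
    (hden : 1 - (y : ℂ) * m ≠ 0)
    (hm : m = ∫ t, 1 / ((t : ℂ) / z - 1 / (1 - (y : ℂ) * m)) ∂H) :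
    y * ∫ t, ‖1 / (1 - (y : ℂ) * m) * (1 / ((t : ℂ) / z - 1 / (1 - (y : ℂ) * m)))‖ ^ 2 ∂H
      < 1 := by
  set w := 1 / (1 - (y : ℂ) * m)
  have key := im_mul_integral_norm_one_div_div_sub_sq_lt hsupp
    (im_one_div_one_sub_ofReal_mul_mul_pos hy him hden) hm
  have hw : w.im * z.im = y * ‖w‖ ^ 2 * (m.im * z.im) := by
    rw [im_one_div_one_sub_ofReal_mul]; ring
  simp only [norm_mul, mul_pow, integral_const_mul]
  rw [hw] at key
  nlinarith

theorem stmt_4_general (H : Measure ℝ) [IsProbabilityMeasure H]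
    (hsupp : ∀ᵐ t ∂H, 0 < t)
    (y : ℝ) (hy : y ∈ Set.Ioo (0 : ℝ) 1)
    (z : ℂ)
    (m₁ m₂ : ℂ)
    (him₁ : 0 < m₁.im * z.im) (him₂ : 0 < m₂.im * z.im)
    (hden₁ : 1 - (y : ℂ) * m₁ ≠ 0) (hden₂ : 1 - (y : ℂ) * m₂ ≠ 0)
    (heq₁ : m₁ = ∫ t, 1 / ((t : ℂ) / z - 1 / (1 - (y : ℂ) * m₁)) ∂H)
    (heq₂ : m₂ = ∫ t, 1 / ((t : ℂ) / z - 1 / (1 - (y : ℂ) * m₂)) ∂H) :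
    m₁ = m₂ := by
  have hK₁ := ofReal_mul_integral_norm_sq_lt_one hsupp hy.1 him₁ hden₁ heq₁
  have hK₂ := ofReal_mul_integral_norm_sq_lt_one hsupp hy.1 him₂ hden₂ heq₂
  set w₁ := 1 / (1 - (y : ℂ) * m₁)
  set w₂ := 1 / (1 - (y : ℂ) * m₂)
  have hw₁ : 0 < w₁.im * z.im := im_one_div_one_sub_ofReal_mul_mul_pos hy.1 him₁ hden₁
  have hw₂ : 0 < w₂.im * z.im := im_one_div_one_sub_ofReal_mul_mul_pos hy.1 him₂ hden₂
  have hmem₁ := memLp_top_one_div_div_sub (hsupp.mono fun _ => le_of_lt) hw₁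
  have hmem₂ := memLp_top_one_div_div_sub (hsupp.mono fun _ => le_of_lt) hw₂
  have hdiff : m₁ - m₂ = (m₁ - m₂) *
      (y * ∫ t, w₁ * (1 / ((t : ℂ) / z - w₁)) * (w₂ * (1 / ((t : ℂ) / z - w₂))) ∂H) := by
    conv_lhs => rw [heq₁, heq₂]
    rw [← integral_sub (hmem₁.integrable le_top) (hmem₂.integrable le_top), ← integral_const_mul,
      ← integral_const_mul]
    refine integral_congr_ae (hsupp.mono fun t ht => ?_)
    exact one_div_sub_sub_one_div_sub (one_div_mul_cancel hden₁) (one_div_mul_cancel hden₂)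
      (div_sub_ne_zero ht.le hw₁) (div_sub_ne_zero ht.le hw₂)
  by_contra hne
  have hone := mul_left_cancel₀ (sub_ne_zero.2 hne) (hdiff.symm.trans (mul_one _).symm)
  have hamgm := norm_integral_mul_le_half_add ((hmem₁.const_mul w₁).mono_exponent le_top)
    ((hmem₂.const_mul w₂).mono_exponent le_top)
  have hnorm := congrArg norm hone
  rw [norm_mul, norm_one, Complex.norm_real, Real.norm_of_nonneg hy.1.le] at hnorm
  nlinarith [hy.1]

/-- Uniqueness of the solution of m = ∫ 1/(λ/z − 1/(1 − y m)) dH(λ) with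
Im(m)·Im(z) > 0. -/
theorem stmt_4 (H : Measure ℝ) [IsProbabilityMeasure H]
    (hsupp : ∀ᵐ t ∂H, 0 < t)
    (y : ℝ) (hy : y ∈ Set.Ioo (0 : ℝ) 1)
    (z : ℂ) (hz : z.im ≠ 0)
    (m₁ m₂ : ℂ)
    (him₁ : 0 < m₁.im * z.im) (him₂ : 0 < m₂.im * z.im)
    (hden₁ : 1 - (y : ℂ) * m₁ ≠ 0) (hden₂ : 1 - (y : ℂ) * m₂ ≠ 0)
    (heq₁ : m₁ = ∫ t, 1 / ((t : ℂ) / z - 1 / (1 - (y : ℂ) * m₁)) ∂H)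
    (heq₂ : m₂ = ∫ t, 1 / ((t : ℂ) / z - 1 / (1 - (y : ℂ) * m₂)) ∂H) :
    m₁ = m₂ :=
  stmt_4_general H hsupp y hy z m₁ m₂ him₁ him₂ hden₁ hden₂ heq₁ heq₂
end

section
/- Define a(z₁,z₂) := 1 + (m̲₁ m̲₂/(m̲₂ − m̲₁))·(1/z₁ − 1/z₂), where m̲ⱼ = m̲(1/zⱼ) are nonzero complex numbers with m̲₁ ≠ m̲₂ and z₁ ≠ z₂ nonzero complex numbers. Assume m̲ⱼ are differentiable functions of zⱼ. Then ∂²/∂z₁∂z₂ of ∫₀^{a(z₁,z₂)} dz/(1−z), i.e. ∂/∂z₂ [(∂a/∂z₁)/(1 − a(z₁,z₂))], equals m̲₁′ m̲₂′/(m̲₂ − m̲₁)² − 1/(z₁ − z₂)², where m̲ⱼ′ denotes d m̲(1/zⱼ)/dzⱼ. -/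
/-!
Write `u = 1/z` and `N = 1/m̲(1/z)`. Then `1 - a = -(u₁ - u₂)/(N₁ - N₂)`, so `∂₁a/(1 - a)` is the
difference of logarithmic derivatives `N₁'/(N₁ - N₂) - u₁'/(u₁ - u₂)`, and differentiating in `z₂`
gives `N₁'N₂'/(N₁ - N₂)² - u₁'u₂'/(u₁ - u₂)²`. The kernel `f'(x) f'(y)/(f x - f y)²` is unchanged
under `f ↦ 1/f`, which turns these two terms into the stated ones.
-/

open Topology

section MixedDerivative

variable {𝕜 : Type*} [NontriviallyNormedField 𝕜]

theorem logDeriv_sub_const_div_sub_const {f g : 𝕜 → 𝕜} {x : 𝕜} (c d : 𝕜)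
    (hf : DifferentiableAt 𝕜 f x) (hg : DifferentiableAt 𝕜 g x)
    (hfc : f x ≠ c) (hgd : g x ≠ d) :
    logDeriv (fun y => (f y - c) / (g y - d)) x = deriv f x / (f x - c) - deriv g x / (g x - d) := by
  rw [logDeriv_div (f := fun y => f y - c) (g := fun y => g y - d) x (sub_ne_zero.mpr hfc)
      (sub_ne_zero.mpr hgd) (hf.sub_const c) (hg.sub_const d),
    logDeriv_apply, logDeriv_apply, deriv_sub_const, deriv_sub_const]

theorem deriv_div_one_sub_of_eventuallyEq {a : 𝕜 → 𝕜} {f g : 𝕜 → 𝕜} {x : 𝕜} (c d : 𝕜)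
    (hf : DifferentiableAt 𝕜 f x) (hg : DifferentiableAt 𝕜 g x)
    (hfc : f x ≠ c) (hgd : g x ≠ d)
    (ha : a =ᶠ[𝓝 x] fun y => 1 + (f y - c) / (g y - d)) :
    deriv a x / (1 - a x) = deriv g x / (g x - d) - deriv f x / (f x - c) := by
  have hR := logDeriv_sub_const_div_sub_const c d hf hg hfc hgd
  rw [logDeriv_apply] at hR
  rw [ha.deriv_eq, deriv_const_add, ha.eq_of_nhds, sub_add_cancel_left, div_neg, hR, neg_sub]

theorem hasDerivAt_const_div_const_sub {h : 𝕜 → 𝕜} {h' x : 𝕜} (c b : 𝕜)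
    (hh : HasDerivAt h h' x) (hb : b ≠ h x) :
    HasDerivAt (fun y => c / (b - h y)) (c * h' / (b - h x) ^ 2) x := by
  simpa using (hasDerivAt_const x c).fun_div (hh.const_sub b) (sub_ne_zero.mpr hb)

theorem deriv_deriv_div_one_sub_of_eventuallyEq {a : 𝕜 → 𝕜 → 𝕜} {f g : 𝕜 → 𝕜} {z₁ z₂ : 𝕜}
    (hf₁ : DifferentiableAt 𝕜 f z₁) (hf₂ : DifferentiableAt 𝕜 f z₂)
    (hg₁ : DifferentiableAt 𝕜 g z₁) (hg₂ : DifferentiableAt 𝕜 g z₂)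
    (hf : f z₁ ≠ f z₂) (hg : g z₁ ≠ g z₂)
    (ha : ∀ᶠ w₂ in 𝓝 z₂, ∀ᶠ w₁ in 𝓝 z₁, a w₁ w₂ = 1 + (f w₁ - f w₂) / (g w₁ - g w₂)) :
    deriv (fun w₂ => deriv (fun w₁ => a w₁ w₂) z₁ / (1 - a z₁ w₂)) z₂ =
      deriv g z₁ * deriv g z₂ / (g z₁ - g z₂) ^ 2
        - deriv f z₁ * deriv f z₂ / (f z₁ - f z₂) ^ 2 := by
  have hfirst : (fun w₂ => deriv (fun w₁ => a w₁ w₂) z₁ / (1 - a z₁ w₂)) =ᶠ[𝓝 z₂]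
      fun w₂ => deriv g z₁ / (g z₁ - g w₂) - deriv f z₁ / (f z₁ - f w₂) := by
    filter_upwards [ha, hf₂.continuousAt.eventually_ne hf.symm,
      hg₂.continuousAt.eventually_ne hg.symm] with w₂ ha hfw hgw
    exact deriv_div_one_sub_of_eventuallyEq _ _ hf₁ hg₁ hfw.symm hgw.symm ha
  rw [hfirst.deriv_eq]
  exact ((hasDerivAt_const_div_const_sub _ _ hg₂.hasDerivAt hg).sub
    (hasDerivAt_const_div_const_sub _ _ hf₂.hasDerivAt hf)).deriv

theorem deriv_inv_mul_deriv_inv_div_sq {h : 𝕜 → 𝕜} {x y : 𝕜}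
    (hx : DifferentiableAt 𝕜 h x) (hy : DifferentiableAt 𝕜 h y) (hx₀ : h x ≠ 0) (hy₀ : h y ≠ 0) :
    deriv (fun w => (h w)⁻¹) x * deriv (fun w => (h w)⁻¹) y / ((h x)⁻¹ - (h y)⁻¹) ^ 2 =
      deriv h x * deriv h y / (h y - h x) ^ 2 := by
  rw [deriv_fun_inv'' hx hx₀, deriv_fun_inv'' hy hy₀, inv_sub_inv hx₀ hy₀]
  field_simp

end MixedDerivative

theorem mul_div_sub_mul_eq_div_inv_sub_inv {K : Type*} [Field K] {x y : K} (hx : x ≠ 0) (hy : y ≠ 0)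
    (t : K) : x * y / (y - x) * t = t / (x⁻¹ - y⁻¹) := by
  rw [inv_sub_inv hx hy, div_div_eq_mul_div]
  ring

theorem stmt_11_general (m : ℂ → ℂ) (hm : Differentiable ℂ m)
    (z₁ z₂ : ℂ) (hz₁ : z₁ ≠ 0) (hz₂ : z₂ ≠ 0) (hne : z₁ ≠ z₂)
    (hm₁ : m (1 / z₁) ≠ 0) (hm₂ : m (1 / z₂) ≠ 0)
    (hmne : m (1 / z₁) ≠ m (1 / z₂))
    (a : ℂ → ℂ → ℂ)
    (ha : ∀ w₁ w₂ : ℂ, a w₁ w₂ =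
      1 + (m (1 / w₁) * m (1 / w₂) / (m (1 / w₂) - m (1 / w₁))) * (1 / w₁ - 1 / w₂)) :
    deriv (fun w₂ => (deriv (fun w₁ => a w₁ w₂) z₁) / (1 - a z₁ w₂)) z₂
      = (deriv (fun w => m (1 / w)) z₁) * (deriv (fun w => m (1 / w)) z₂)
          / (m (1 / z₂) - m (1 / z₁)) ^ 2
        - 1 / (z₁ - z₂) ^ 2 := by
  set M : ℂ → ℂ := fun w => m (1 / w)
  have hM : ∀ w ≠ 0, DifferentiableAt ℂ M w := fun w hw =>
    (hm _).comp w ((differentiableAt_const 1).div differentiableAt_id hw)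
  have haInv : ∀ᶠ w₂ in 𝓝 z₂, ∀ᶠ w₁ in 𝓝 z₁,
      a w₁ w₂ = 1 + (w₁⁻¹ - w₂⁻¹) / ((M w₁)⁻¹ - (M w₂)⁻¹) := by
    filter_upwards [(hM z₂ hz₂).continuousAt.eventually_ne hm₂] with w₂ hw₂
    filter_upwards [(hM z₁ hz₁).continuousAt.eventually_ne hm₁] with w₁ hw₁
    rw [ha, mul_div_sub_mul_eq_div_inv_sub_inv hw₁ hw₂, one_div, one_div]
  rw [deriv_deriv_div_one_sub_of_eventuallyEq (f := fun w => w⁻¹) (g := fun w => (M w)⁻¹)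
      (differentiableAt_inv hz₁) (differentiableAt_inv hz₂) ((hM z₁ hz₁).inv hm₁) ((hM z₂ hz₂).inv hm₂)
      (inv_injective.ne hne) (inv_injective.ne hmne) haInv,
    deriv_inv_mul_deriv_inv_div_sq (hM z₁ hz₁) (hM z₂ hz₂) hm₁ hm₂,
    deriv_inv_mul_deriv_inv_div_sq (h := fun w => w) differentiableAt_id differentiableAt_id hz₁ hz₂,
    deriv_id'', mul_one, sub_sq_comm z₂ z₁]

/-- The mixed second derivative ∂/∂z₂ [(∂a/∂z₁)/(1 − a)] of the function
a(z₁,z₂) = 1 + (m̲₁m̲₂/(m̲₂−m̲₁))(1/z₁ − 1/z₂), with m̲ⱼ = m̲(1/zⱼ), equals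
m̲₁′m̲₂′/(m̲₂ − m̲₁)² − 1/(z₁ − z₂)². -/
theorem stmt_11 (m : ℂ → ℂ) (hm : Differentiable ℂ m)
    (z₁ z₂ : ℂ) (hz₁ : z₁ ≠ 0) (hz₂ : z₂ ≠ 0) (hne : z₁ ≠ z₂)
    (hm₁ : m (1 / z₁) ≠ 0) (hm₂ : m (1 / z₂) ≠ 0)
    (hmne : m (1 / z₁) ≠ m (1 / z₂))
    (a : ℂ → ℂ → ℂ)
    (ha : ∀ w₁ w₂ : ℂ, a w₁ w₂ =
      1 + (m (1 / w₁) * m (1 / w₂) / (m (1 / w₂) - m (1 / w₁))) * (1 / w₁ - 1 / w₂))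
    (hane : a z₁ z₂ ≠ 1) :
    deriv (fun w₂ => (deriv (fun w₁ => a w₁ w₂) z₁) / (1 - a z₁ w₂)) z₂
      = (deriv (fun w => m (1 / w)) z₁) * (deriv (fun w => m (1 / w)) z₂)
          / (m (1 / z₂) - m (1 / z₁)) ^ 2
        - 1 / (z₁ - z₂) ^ 2 :=
  stmt_11_general m hm z₁ z₂ hz₁ hz₂ hne hm₁ hm₂ hmne a ha
end

section
/- Let H be a probability measure on (0,∞) and y ∈ (0,1). For distinct nonzero complex numbers z₁, z₂ (non-real), with m̲ⱼ := m̲(1/zⱼ) satisfying ∫ dH(t)/(t + m̲ⱼ) = (1/y)(1/zⱼ + 1/m̲ⱼ) and m̲₁ ≠ m̲₂, the quantity a(z₁,z₂) := y ∫ m̲₁ m̲₂ / ((t + m̲₁)(t + m̲₂)) dH(t) equals 1 + (m̲₁ m̲₂/(m̲₂ − m̲₁))·(1/z₁ − 1/z₂). -/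
open MeasureTheory

theorem one_div_add_mul_add_eq {K : Type*} [Field K] {u a b : K}
    (ha : u + a ≠ 0) (hb : u + b ≠ 0) (hab : a ≠ b) :
    1 / ((u + a) * (u + b)) = (1 / (u + a) - 1 / (u + b)) / (b - a) := by
  have hba : b - a ≠ 0 := sub_ne_zero.mpr hab.symm
  field_simp
  ring

theorem integral_div_add_mul_add {α : Type*} [MeasurableSpace α] {μ : Measure α} {f : α → ℂ}
    {a b : ℂ} (c : ℂ) (hab : a ≠ b)
    (ha : ∀ᵐ x ∂μ, f x + a ≠ 0) (hb : ∀ᵐ x ∂μ, f x + b ≠ 0)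
    (hia : Integrable (fun x => 1 / (f x + a)) μ) (hib : Integrable (fun x => 1 / (f x + b)) μ) :
    ∫ x, c / ((f x + a) * (f x + b)) ∂μ
      = c / (b - a) * ((∫ x, 1 / (f x + a) ∂μ) - ∫ x, 1 / (f x + b) ∂μ) := by
  rw [← integral_sub hia hib, ← integral_const_mul]
  refine integral_congr_ae ?_
  filter_upwards [ha, hb] with x hxa hxb
  rw [div_eq_mul_one_div c, one_div_add_mul_add_eq hxa hxb hab]
  ring

theorem stmt_12_general (H : Measure ℝ)
    (y : ℝ) (hy : y ∈ Set.Ioo (0 : ℝ) 1)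
    (z₁ z₂ : ℂ)
    (m₁ m₂ : ℂ) (hm₁ : m₁ ≠ 0) (hm₂ : m₂ ≠ 0) (hmne : m₁ ≠ m₂)
    (hden₁ : ∀ᵐ (t : ℝ) ∂H, (t : ℂ) + m₁ ≠ 0)
    (hden₂ : ∀ᵐ (t : ℝ) ∂H, (t : ℂ) + m₂ ≠ 0)
    (hint₁ : Integrable (fun t : ℝ => 1 / ((t : ℂ) + m₁)) H)
    (hint₂ : Integrable (fun t : ℝ => 1 / ((t : ℂ) + m₂)) H)
    (heq₁ : ∫ t, 1 / ((t : ℂ) + m₁) ∂H = (1 / (y : ℂ)) * (1 / z₁ + 1 / m₁))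
    (heq₂ : ∫ t, 1 / ((t : ℂ) + m₂) ∂H = (1 / (y : ℂ)) * (1 / z₂ + 1 / m₂)) :
    (y : ℂ) * ∫ t, m₁ * m₂ / (((t : ℂ) + m₁) * ((t : ℂ) + m₂)) ∂H
      = 1 + (m₁ * m₂ / (m₂ - m₁)) * (1 / z₁ - 1 / z₂) := by
  have hy₀ : (y : ℂ) ≠ 0 := by exact_mod_cast hy.1.ne'
  have hm : m₂ - m₁ ≠ 0 := sub_ne_zero.mpr hmne.symm
  rw [integral_div_add_mul_add _ hmne hden₁ hden₂ hint₁ hint₂, heq₁, heq₂]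
  field_simp
  ring

/-- Partial fraction computation of a(z₁,z₂) = y ∫ m̲₁m̲₂/((t+m̲₁)(t+m̲₂)) dH(t). -/
theorem stmt_12 (H : Measure ℝ) [IsProbabilityMeasure H]
    (hsupp : ∀ᵐ t ∂H, 0 < t)
    (y : ℝ) (hy : y ∈ Set.Ioo (0 : ℝ) 1)
    (z₁ z₂ : ℂ) (hz₁ : z₁ ≠ 0) (hz₂ : z₂ ≠ 0)
    (him₁ : z₁.im ≠ 0) (him₂ : z₂.im ≠ 0) (hne : z₁ ≠ z₂)
    (m₁ m₂ : ℂ) (hm₁ : m₁ ≠ 0) (hm₂ : m₂ ≠ 0) (hmne : m₁ ≠ m₂)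
    (hden₁ : ∀ᵐ (t : ℝ) ∂H, (t : ℂ) + m₁ ≠ 0)
    (hden₂ : ∀ᵐ (t : ℝ) ∂H, (t : ℂ) + m₂ ≠ 0)
    (hint₁ : Integrable (fun t : ℝ => 1 / ((t : ℂ) + m₁)) H)
    (hint₂ : Integrable (fun t : ℝ => 1 / ((t : ℂ) + m₂)) H)
    (heq₁ : ∫ t, 1 / ((t : ℂ) + m₁) ∂H = (1 / (y : ℂ)) * (1 / z₁ + 1 / m₁))
    (heq₂ : ∫ t, 1 / ((t : ℂ) + m₂) ∂H = (1 / (y : ℂ)) * (1 / z₂ + 1 / m₂)) :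
    (y : ℂ) * ∫ t, m₁ * m₂ / (((t : ℂ) + m₁) * ((t : ℂ) + m₂)) ∂H
      = 1 + (m₁ * m₂ / (m₂ - m₁)) * (1 / z₁ - 1 / z₂) :=
  stmt_12_general H y hy z₁ z₂ m₁ m₂ hm₁ hm₂ hmne hden₁ hden₂ hint₁ hint₂ heq₁ heq₂
end
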